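/- Let 𝔉 be an iterated graph system satisfying Assumption (GR) which admits a flipping symmetry η_t for every type t, and let C_deg = sup_{m ∈ ℕ, w ∈ W_m} deg_{G_m}(w) (finite by (GR1)–(GR2)). Fix p ∈ (1,∞), q = p/(p−1), n,m ∈ ℕ, nonempty disjoint sets A_n,B_n ⊆ W_n together with an assignment of a pair (𝔱(u),𝔬(u)) ∈ 𝒯×{+,−} to each u ∈ A_n∪B_n, a flow basis 𝓕^{(m)} of G̃_m, and a unit flow F_n from A_n to B_n in G_n. Set A_{n+m} = {uv : u ∈ A_n, v ∈ I_{𝔱(u),𝔬(u)}^{(m)}} and B_{n+m} = {uv : u ∈ B_n, v ∈ I_{𝔱(u),𝔬(u)}^{(m)}}. Then there exist a constant C ≥ 1 depending only on C_deg and continuously on p, and a unit flow F_{n+m} from A_{n+m} to B_{n+m} in G_{n+m}, such that E_q(F_{n+m}) ≤ C·E_q(𝓕^{(m)})·E_q(F_n), and such that for every u ∈ A_n∪B_n and every v ∈ L := I_{𝔱(u),𝔬(u)}^{(m)}, div F_{n+m}(uv) = div F_n(u)·𝓕_{[L→L*]}(v_L,v), where L* = I_{𝔱(u),−𝔬(u)}^{(m)}.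 -/

import Mathlib

namespace IGSP

/-- An iterated graph system: a finite connected oriented graph `G₁ = (S, E)`, a set of
types `T` with a surjective typing map on edges, and nonempty gluing rules `I_t ⊆ S × S`. -/
structure System (S T : Type) where
  E : S → S → Prop
  not_both : ∀ x y : S, E x y → ¬ E y x
  irrefl : ∀ x : S, ¬ E x x
  conn : ∀ x y : S, Relation.ReflTransGen (fun a b => E a b ∨ E b a) x y
  typ : S → S → T
  typ_surj : ∀ t : T, ∃ x y, E x y ∧ typ x y = t
  glue : T → S → S → Prop
  glue_nonempty : ∀ t : T, ∃ x y, glue t x y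

variable {S T : Type}

/-- Words of length `m` over the symbol set `S`. -/
abbrev Word (S : Type) (m : ℕ) := Fin m → S

open Classical in
/-- The replacement graphs together with their typing functions, defined by recursion on
the length of words: `G₁ = (S,E)` and an oriented edge `(w,v) ∈ E_{m+1}` holds iff either
the length-`m` prefixes agree and the last symbols form an edge of `G₁`, or the prefixes
form an edge of `E_m` and the last symbols belong to the gluing rule of its type. -/
noncomputable def replData [Nonempty T] (F : System S T) :
    (L : ℕ) → (Word S L → Word S L → Prop) × (Word S L → Word S L → T)
  | 0 => ⟨fun _ _ => False, fun _ _ => Classical.arbitrary T⟩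
  | 1 => ⟨fun w v => F.E (w 0) (v 0), fun w v => F.typ (w 0) (v 0)⟩
  | L + 2 =>
      ⟨fun w v =>
        (Fin.init w = Fin.init v ∧ F.E (w (Fin.last (L + 1))) (v (Fin.last (L + 1)))) ∨
        ((replData F (L + 1)).1 (Fin.init w) (Fin.init v) ∧
          F.glue ((replData F (L + 1)).2 (Fin.init w) (Fin.init v))
            (w (Fin.last (L + 1))) (v (Fin.last (L + 1)))),
       fun w v =>
        if Fin.init w = Fin.init v then F.typ (w (Fin.last (L + 1))) (v (Fin.last (L + 1)))
        else (replData F (L + 1)).2 (Fin.init w) (Fin.init v)⟩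

/-- The oriented edge relation of the replacement graph on words of length `L`. -/
def edge [Nonempty T] (F : System S T) (L : ℕ) (w v : Word S L) : Prop :=
  (replData F L).1 w v

/-- The typing function of the replacement graph on words of length `L`. -/
noncomputable def etyp [Nonempty T] (F : System S T) (L : ℕ) (w v : Word S L) : T :=
  (replData F L).2 w v

/-- The unoriented edge ("{w,v} ∈ E_L") relation. -/
def adjW [Nonempty T] (F : System S T) (L : ℕ) (w v : Word S L) : Prop :=
  edge F L w v ∨ edge F L v w

/-- The replacement graph `G_L` as a simple graph on words of length `L`. -/
noncomputable def replGraph [Nonempty T] (F : System S T) (L : ℕ) : SimpleGraph (Word S L) where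
  Adj w v := w ≠ v ∧ adjW F L w v
  symm := by
    constructor
    intro w v h
    exact ⟨Ne.symm h.1, Or.symm h.2⟩
  loopless := by
    constructor
    intro w h
    exact h.1 rfl

/-- The degree of a word `w` in the replacement graph `G_L`: the number of `v` with
`{w,v} ∈ E_L`. -/
noncomputable def degGm [Nonempty T] (F : System S T) (L : ℕ) (w : Word S L) : ℕ :=
  {v : Word S L | adjW F L w v}.ncard

/-- `I_{t,+}`, the set of symbols occurring as the first coordinate of the gluing rule. -/
def Iplus (F : System S T) (t : T) : Set S := {a | ∃ b, F.glue t a b}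

/-- `I_{t,-}`, the set of symbols occurring as the second coordinate of the gluing rule. -/
def Iminus (F : System S T) (t : T) : Set S := {b | ∃ a, F.glue t a b}

/-- `I_{t,★}` where the orientation `★` is encoded by a boolean: `true = +`, `false = -`. -/
def Iset (F : System S T) (t : T) : Bool → Set S
  | true => Iplus F t
  | false => Iminus F t

/-- `I_{t,★}^{(m)} = (I_{t,★})^m ⊆ W_m`. -/
def IsetW (F : System S T) (t : T) (b : Bool) (m : ℕ) : Set (Word S m) :=
  {w | ∀ i, w i ∈ Iset F t b}

/-- The boundary `∂G_m = ⋃_{(t,★)} I_{t,★}^{(m)}`. -/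
def boundaryW (F : System S T) (m : ℕ) : Set (Word S m) :=
  ⋃ (t : T) (b : Bool), IsetW F t b m

/-- (GR1): every symbol has at most one gluing partner for each type and orientation. -/
def GR1 (F : System S T) : Prop :=
  ∀ (t : T) (s : S), {b | F.glue t s b}.Subsingleton ∧ {a | F.glue t a s}.Subsingleton

/-- (GR2): for no type, orientation and symbol are the gluing-partner count and the
corresponding oriented degree in `G₁` simultaneously nonzero. -/
def GR2 (F : System S T) : Prop :=
  ∀ (t : T) (s : S),
    ¬ ((∃ b, F.glue t s b) ∧ ∃ b, F.E s b ∧ F.typ s b = t) ∧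
    ¬ ((∃ a, F.glue t a s) ∧ ∃ a, F.E a s ∧ F.typ a s = t)

/-- (GR3): `I_{t,-} ∩ I_{t,+} = ∅` for every type `t`. -/
def GR3 (F : System S T) : Prop := ∀ t : T, Iminus F t ∩ Iplus F t = ∅

/-- Assumption (GR). -/
def GR (F : System S T) : Prop := GR1 F ∧ GR2 F ∧ GR3 F

/-- A path in the replacement graph `G_L`: a nonempty list of words with consecutive
entries joined by an edge. -/
def IsPath [Nonempty T] (F : System S T) (L : ℕ) (θ : List (Word S L)) : Prop :=
  θ ≠ [] ∧ θ.Chain' (adjW F L)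

open Classical in
/-- The projection `π_{L,k}` of a path: take length-`k` prefixes and remove consecutive
repetitions. -/
noncomputable def proj {k L : ℕ} (h : k ≤ L) (θ : List (Word S L)) : List (Word S k) :=
  (θ.map fun w => fun i => w (Fin.castLE h i)).destutter (· ≠ ·)

/-- An intersection path in `G_{m+1}`: a path admitting a compatible sequence of paths at
all levels with uniformly bounded lengths. -/
def IsIntersectionPath [Nonempty T] (F : System S T) (m : ℕ) (θ : List (Word S (m + 1))) :
    Prop :=
  IsPath F (m + 1) θ ∧
  ∃ Θ : (n : ℕ) → List (Word S (n + 1)),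
    Θ m = θ ∧ (∀ n, IsPath F (n + 1) (Θ n)) ∧
    (∀ (k n : ℕ) (h : k ≤ n), proj (Nat.succ_le_succ h) (Θ n) = Θ k) ∧
    ∃ C : ℕ, ∀ n, (Θ n).length ≤ C

/-- The fundamental neighbourhood `𝒩(w)`. -/
def nbhd [Nonempty T] (F : System S T) (m : ℕ) (w : Word S (m + 1)) :
    Set (Word S (m + 1)) :=
  {v | ∃ θ, IsIntersectionPath F m θ ∧ θ.head? = some w ∧ θ.getLast? = some v}

/-- Bounded geometry: the diameters of fundamental neighbourhoods are uniformly bounded. -/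
def BoundedGeometry [Nonempty T] (F : System S T) : Prop :=
  ∃ D : ℕ, ∀ (m : ℕ) (w : Word S (m + 1)), ∀ v₁ ∈ nbhd F m w, ∀ v₂ ∈ nbhd F m w,
    (replGraph F (m + 1)).dist v₁ v₂ ≤ D

/-- `|w ∧ v| < L` for words of length `L`: the words differ at some index below the last. -/
def ncRel {L : ℕ} (w v : Word S L) : Prop := ∃ j : Fin L, (j : ℕ) + 1 < L ∧ w j ≠ v j

/-- A non-collapsing path: consecutive vertices satisfy `|w ∧ v| < L`. -/
def NonCollapsing {L : ℕ} (θ : List (Word S L)) : Prop := θ.Chain' ncRel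

/-- A mapping between iterated graph systems. -/
structure Hom {S T S' T' : Type} (F : System S T) (F' : System S' T') where
  toFun : S → S'
  map_edge : ∀ x y, (F.E x y ∨ F.E y x) →
    (toFun x = toFun y ∨ F'.E (toFun x) (toFun y) ∨ F'.E (toFun y) (toFun x))
  glue_collapse : ∀ w1 v1, F.E w1 v1 → toFun w1 = toFun v1 →
    ∀ w2 v2, F.glue (F.typ w1 v1) w2 v2 → toFun w2 = toFun v2
  glue_fwd : ∀ w1 v1, F.E w1 v1 → F'.E (toFun w1) (toFun v1) →
    ∀ w2 v2, F.glue (F.typ w1 v1) w2 v2 →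
      F'.glue (F'.typ (toFun w1) (toFun v1)) (toFun w2) (toFun v2)
  glue_rev : ∀ w1 v1, F.E w1 v1 → F'.E (toFun v1) (toFun w1) →
    ∀ w2 v2, F.glue (F.typ w1 v1) w2 v2 →
      F'.glue (F'.typ (toFun v1) (toFun w1)) (toFun v2) (toFun w2)

/-- An isomorphism between iterated graph systems: a pair of mutually inverse mappings. -/
structure Iso {S T S' T' : Type} (F : System S T) (F' : System S' T') where
  hom : Hom F F'
  inv : Hom F' F
  left_inv : ∀ x, inv.toFun (hom.toFun x) = x
  right_inv : ∀ y, hom.toFun (inv.toFun y) = y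

/-- A flipping symmetry of type `t`. -/
def IsFlip (F : System S T) (t : T) (η : Iso F F) : Prop :=
  (∀ w ∈ Iplus F t, F.glue t w (η.hom.toFun w)) ∧
  (∀ v ∈ Iminus F t, F.glue t (η.hom.toFun v) v)

/-- The data of a reflection symmetry of an iterated graph system: an involutive
isomorphism together with the partition `S = C ∪ D ∪ Δ` satisfying (D1)-(D4). -/
structure ReflData (F : System S T) where
  iso : Iso F F
  C : Set S
  D : Set S
  invol : ∀ x, iso.hom.toFun (iso.hom.toFun x) = x
  C_not_fixed : ∀ x ∈ C, iso.hom.toFun x ≠ x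
  D_not_fixed : ∀ x ∈ D, iso.hom.toFun x ≠ x
  CD_disjoint : ∀ x, ¬ (x ∈ C ∧ x ∈ D)
  cover : ∀ x, x ∈ C ∨ x ∈ D ∨ iso.hom.toFun x = x
  image_C : iso.hom.toFun '' C = D
  edge_CD : ∀ x ∈ C, ∀ y ∈ D, (F.E x y ∨ F.E y x) → iso.hom.toFun x = y
  D2 : ∀ w1 v1, F.E w1 v1 → iso.hom.toFun v1 = v1 →
    (w1 ∈ C → Iminus F (F.typ w1 v1) ⊆ C ∪ {x | iso.hom.toFun x = x}) ∧
    (w1 ∈ D → Iminus F (F.typ w1 v1) ⊆ D ∪ {x | iso.hom.toFun x = x})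
  D3 : ∀ w1 v1, F.E w1 v1 → iso.hom.toFun w1 = w1 →
    (v1 ∈ C → Iplus F (F.typ w1 v1) ⊆ C ∪ {x | iso.hom.toFun x = x}) ∧
    (v1 ∈ D → Iplus F (F.typ w1 v1) ⊆ D ∪ {x | iso.hom.toFun x = x})
  D4 : ∀ w1 v1, F.E w1 v1 → iso.hom.toFun w1 = w1 → iso.hom.toFun v1 = v1 →
    ∀ w2 v2, F.glue (F.typ w1 v1) w2 v2 →
      (w2 ∈ C ∧ v2 ∈ C) ∨ (w2 ∈ D ∧ v2 ∈ D) ∨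
      (iso.hom.toFun w2 = w2 ∧ iso.hom.toFun v2 = v2)

/-- (D5): a reflection symmetry. -/
def IsRefl {F : System S T} (R : ReflData F) : Prop :=
  ∀ w1 v1, F.E w1 v1 → w1 ∈ R.C → v1 ∈ R.D →
    ∀ w2 v2, F.glue (F.typ w1 v1) w2 v2 → R.iso.hom.toFun w2 = v2

/-- (D5*): a separative reflection symmetry. -/
def IsSepRefl {F : System S T} (R : ReflData F) : Prop :=
  ∀ x ∈ R.C, ∀ y ∈ R.D, ¬ (F.E x y ∨ F.E y x)

/-- The coordinatewise action of a reflection symmetry on words. -/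
def wordMap {F : System S T} (R : ReflData F) {m : ℕ} (w : Word S m) : Word S m :=
  fun i => R.iso.hom.toFun (w i)

/-- The lifted set `C_α^{(m)}`: words whose first non-fixed coordinate lies in `C`. -/
def liftC {F : System S T} (R : ReflData F) (m : ℕ) : Set (Word S m) :=
  {w | ∃ k : Fin m, w k ∈ R.C ∧ ∀ j < k, R.iso.hom.toFun (w j) = w j}

/-- The lifted set `D_α^{(m)}`: words whose first non-fixed coordinate lies in `D`. -/
def liftD {F : System S T} (R : ReflData F) (m : ℕ) : Set (Word S m) :=
  {w | ∃ k : Fin m, w k ∈ R.D ∧ ∀ j < k, R.iso.hom.toFun (w j) = w j}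

end IGSP
namespace IGSP

variable {S T : Type}

/-- An antisymmetric function supported on the edges of a graph. -/
def Antisym {V : Type} (G : SimpleGraph V) (Φ : V → V → ℝ) : Prop :=
  (∀ x y, Φ x y = - Φ y x) ∧ ∀ x y, ¬ G.Adj x y → Φ x y = 0

/-- The divergence of `Φ` at a vertex. -/
noncomputable def fdiv {V : Type} (Φ : V → V → ℝ) (x : V) : ℝ := ∑ᶠ y, Φ x y

/-- A flow from `A` to `B`. -/
def IsFlow {V : Type} (G : SimpleGraph V) (A B : Set V) (Φ : V → V → ℝ) : Prop :=
  Antisym G Φ ∧ ∀ x, x ∉ A ∪ B → fdiv Φ x = 0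

/-- The total flow `I(Φ) = Σ_{x ∈ A} div Φ (x)`. -/
noncomputable def totalFlow {V : Type} (A : Set V) (Φ : V → V → ℝ) : ℝ :=
  ∑ᶠ x ∈ A, fdiv Φ x

/-- The `q`-energy `E_q(Φ) = Σ_{{x,y} ∈ E} |Φ(x,y)|^q` (each unordered edge counted once). -/
noncomputable def energy {V : Type} (q : ℝ) (Φ : V → V → ℝ) : ℝ :=
  (∑ᶠ x, ∑ᶠ y, |Φ x y| ^ q) / 2

/-- The degree of a vertex of a graph. -/
noncomputable def degOf {V : Type} (G : SimpleGraph V) (x : V) : ℕ := {y | G.Adj x y}.ncard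

/-- The maximal degree of a finite graph. -/
noncomputable def maxDeg {V : Type} [Fintype V] (G : SimpleGraph V) : ℕ :=
  Finset.univ.sup fun x => degOf G x

/-- The diameter of a finite graph (in the shortest-path metric). -/
noncomputable def gdiam {V : Type} [Fintype V] (G : SimpleGraph V) : ℕ :=
  Finset.univ.sup fun pr : V × V => G.dist pr.1 pr.2

/-- The set of vertices of a path. -/
def pathVerts {V : Type} (θ : List V) : Set V := {x | x ∈ θ}

/-- A density is admissible for a path family if it is nonnegative and its sum along
every path of the family is at least 1. -/
def Admissible {V : Type} (Θ : Set (List V)) (ρ : V → ℝ) : Prop :=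
  (∀ x, 0 ≤ ρ x) ∧ ∀ θ ∈ Θ, 1 ≤ ∑ᶠ x ∈ pathVerts θ, ρ x

/-- The discrete (vertex) `p`-modulus of a family of paths. -/
noncomputable def modulus {V : Type} (p : ℝ) (Θ : Set (List V)) : ℝ :=
  sInf {M | ∃ ρ : V → ℝ, Admissible Θ ρ ∧ M = ∑ᶠ x, ρ x ^ p}

/-- The `p`-resistance `E_q(A,B,G)`: infimal `q`-energy of unit flows from `A` to `B`. -/
noncomputable def resistance {V : Type} (q : ℝ) (G : SimpleGraph V) (A B : Set V) : ℝ :=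
  sInf {e | ∃ Φ, IsFlow G A B Φ ∧ totalFlow A Φ = 1 ∧ e = energy q Φ}

/-- The family `Θ_𝔞^{(m)}` of paths in `G_m` from `I_{t₁,★₁}^{(m)}` to `I_{t₂,★₂}^{(m)}`. -/
def ThetaIGS [Nonempty T] (F : System S T) (m : ℕ) (t₁ : T) (b₁ : Bool) (t₂ : T)
    (b₂ : Bool) : Set (List (Word S m)) :=
  {θ | IsPath F m θ ∧ (∃ w ∈ IsetW F t₁ b₁ m, θ.head? = some w) ∧
    ∃ v ∈ IsetW F t₂ b₂ m, θ.getLast? = some v}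

/-- `ℒ^{(m)}`, the collection of sets `I_{t,★}^{(m)}`. -/
def scriptL [Nonempty T] (F : System S T) (m : ℕ) : Set (Set (Word S m)) :=
  {A | ∃ (t : T) (b : Bool), A = IsetW F t b m}

/-- The added vertices `v_L` (for `L ∈ ℒ^{(m)}` and `v ∈ L`) of the graph `G̃_m`. -/
def AddedV [Nonempty T] (F : System S T) (m : ℕ) :=
  {pr : Set (Word S m) × Word S m // pr.1 ∈ scriptL F m ∧ pr.2 ∈ pr.1}

/-- The vertex set of the graph `G̃_m`. -/
def TildeV [Nonempty T] (F : System S T) (m : ℕ) := Word S m ⊕ AddedV F m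

/-- The graph `G̃_m`, obtained from `G_m` by attaching a pendant vertex `v_L` at every
`v ∈ L` for every `L ∈ ℒ^{(m)}`. -/
noncomputable def tildeG [Nonempty T] (F : System S T) (m : ℕ) : SimpleGraph (TildeV F m) where
  Adj x y :=
    match x, y with
    | Sum.inl w, Sum.inl v => w ≠ v ∧ adjW F m w v
    | Sum.inl w, Sum.inr pr => pr.1.2 = w
    | Sum.inr pr, Sum.inl w => pr.1.2 = w
    | Sum.inr _, Sum.inr _ => False
  symm := by
    constructor
    rintro (w | pr) (v | qr) h
    · exact ⟨Ne.symm h.1, Or.symm h.2⟩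
    · exact h
    · exact h
    · exact h.elim
  loopless := by
    constructor
    rintro (w | pr) h
    · exact h.1 rfl
    · exact h

/-- The set `L̃ = {v_L : v ∈ L}` of added vertices over `L`. -/
def tildeSet [Nonempty T] (F : System S T) (m : ℕ) (L : Set (Word S m)) :
    Set (TildeV F m) :=
  {x | ∃ pr : AddedV F m, pr.1.1 = L ∧ x = Sum.inr pr}

/-- A flow basis on `G̃_m`: a family of unit flows between the added vertex sets of all
pairs of distinct members of `ℒ^{(m)}`, satisfying (FB1)–(FB4). -/
structure FlowBasis [Nonempty T] (F : System S T) (ηfam : T → Iso F F) (m : ℕ) where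
  flow : (L₁ L₂ : Set (Word S m)) → L₁ ∈ scriptL F m → L₂ ∈ scriptL F m → L₁ ≠ L₂ →
    TildeV F m → TildeV F m → ℝ
  flow_isFlow : ∀ (L₁ L₂ : Set (Word S m)) (h₁ : L₁ ∈ scriptL F m) (h₂ : L₂ ∈ scriptL F m)
    (hne : L₁ ≠ L₂),
    IsFlow (tildeG F m) (tildeSet F m L₁) (tildeSet F m L₂) (flow L₁ L₂ h₁ h₂ hne)
  flow_unit : ∀ (L₁ L₂ : Set (Word S m)) (h₁ : L₁ ∈ scriptL F m) (h₂ : L₂ ∈ scriptL F m)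
    (hne : L₁ ≠ L₂), totalFlow (tildeSet F m L₁) (flow L₁ L₂ h₁ h₂ hne) = 1
  fb2 : ∀ (L₁ L₂ : Set (Word S m)) (h₁ : L₁ ∈ scriptL F m) (h₂ : L₂ ∈ scriptL F m)
    (hne : L₁ ≠ L₂) (pr : AddedV F m), pr.1.1 ≠ L₁ → pr.1.1 ≠ L₂ →
    flow L₁ L₂ h₁ h₂ hne (Sum.inr pr) (Sum.inl pr.1.2) = 0
  fb3_out : ∀ (L L₁ L₂ : Set (Word S m)) (hL : L ∈ scriptL F m) (h₁ : L₁ ∈ scriptL F m)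
    (h₂ : L₂ ∈ scriptL F m) (hne₁ : L ≠ L₁) (hne₂ : L ≠ L₂) (pr : AddedV F m),
    pr.1.1 = L →
    flow L L₁ hL h₁ hne₁ (Sum.inr pr) (Sum.inl pr.1.2) =
      flow L L₂ hL h₂ hne₂ (Sum.inr pr) (Sum.inl pr.1.2)
  fb3_in : ∀ (L L₁ L₂ : Set (Word S m)) (hL : L ∈ scriptL F m) (h₁ : L₁ ∈ scriptL F m)
    (h₂ : L₂ ∈ scriptL F m) (hne₁ : L₁ ≠ L) (hne₂ : L₂ ≠ L) (pr : AddedV F m),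
    pr.1.1 = L →
    flow L₁ L h₁ hL hne₁ (Sum.inl pr.1.2) (Sum.inr pr) =
      flow L₂ L h₂ hL hne₂ (Sum.inl pr.1.2) (Sum.inr pr)
  fb4_flip : ∀ (t : T) (b : Bool) (h₁ : IsetW F t b m ∈ scriptL F m)
    (h₂ : IsetW F t (!b) m ∈ scriptL F m) (hne : IsetW F t b m ≠ IsetW F t (!b) m)
    (pr qr : AddedV F m), pr.1.1 = IsetW F t b m → qr.1.1 = IsetW F t (!b) m →
    qr.1.2 = (fun i => (ηfam t).hom.toFun (pr.1.2 i)) →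
    flow (IsetW F t b m) (IsetW F t (!b) m) h₁ h₂ hne (Sum.inr pr) (Sum.inl pr.1.2) =
      flow (IsetW F t b m) (IsetW F t (!b) m) h₁ h₂ hne (Sum.inl qr.1.2) (Sum.inr qr)
  fb4_sym : ∀ (t : T) (b : Bool) (h₁ : IsetW F t b m ∈ scriptL F m)
    (h₂ : IsetW F t (!b) m ∈ scriptL F m) (hne : IsetW F t b m ≠ IsetW F t (!b) m)
    (hne' : IsetW F t (!b) m ≠ IsetW F t b m) (pr : AddedV F m),
    pr.1.1 = IsetW F t b m →
    flow (IsetW F t b m) (IsetW F t (!b) m) h₁ h₂ hne (Sum.inr pr) (Sum.inl pr.1.2) =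
      flow (IsetW F t (!b) m) (IsetW F t b m) h₂ h₁ hne' (Sum.inl pr.1.2) (Sum.inr pr)

/-- The `q`-energy of a flow basis: the maximal energy of its members. -/
noncomputable def basisEnergy [Nonempty T] {F : System S T} {ηfam : T → Iso F F} {m : ℕ}
    (q : ℝ) (FB : FlowBasis F ηfam m) : ℝ :=
  sSup {e | ∃ (L₁ L₂ : Set (Word S m)) (h₁ : L₁ ∈ scriptL F m) (h₂ : L₂ ∈ scriptL F m)
    (hne : L₁ ≠ L₂), e = energy q (FB.flow L₁ L₂ h₁ h₂ hne)}

open Classical in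
/-- The twisted flow `T_α(F)` of Proposition "Twist flow". -/
noncomputable def Talpha [Nonempty T] {F : System S T} {m : ℕ} (R : ReflData F)
    (L₁ L₂' : Set (Word S m)) (A : TildeV F m ≃ TildeV F m)
    (Φ : TildeV F m → TildeV F m → ℝ) : TildeV F m → TildeV F m → ℝ := fun x y =>
  if (∃ w, x = Sum.inl w ∧ wordMap R w = w) ∧ (∃ w, y = Sum.inl w ∧ wordMap R w = w) then
    Φ x y
  else if ((∃ w, x = Sum.inl w ∧ w ∈ liftC R m) ∨
        (∃ pr : AddedV F m, x = Sum.inr pr ∧ (pr.1.1 = L₁ ∨ pr.1.1 = L₂'))) ∨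
      ((∃ w, y = Sum.inl w ∧ w ∈ liftC R m) ∨
        (∃ pr : AddedV F m, y = Sum.inr pr ∧ (pr.1.1 = L₁ ∨ pr.1.1 = L₂'))) then
    Φ x y + Φ (A.symm x) (A.symm y)
  else 0

end IGSP
namespace IGSP

/-- The symbol set of the ambient cubical system: `{1,…,L}^d × {1,…,s}` (0-indexed). -/
abbrev CSym (d L s : ℕ) := (Fin d → Fin L) × Fin s

/-- The ambient edge relation of type `t_j`. -/
def ambE {d L s : ℕ} (j : Fin d) (w v : CSym d L s) : Prop :=
  (∀ i, i ≠ j → w.1 i = v.1 i) ∧ (v.1 j : ℕ) = (w.1 j : ℕ) + 1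

/-- The ambient gluing rule of type `t_j`. -/
def ambI {d L s : ℕ} (j : Fin d) (w v : CSym d L s) : Prop :=
  (∀ i, i ≠ j → w.1 i = v.1 i) ∧ (w.1 j : ℕ) = L - 1 ∧ (v.1 j : ℕ) = 0 ∧ w.2 = v.2

/-- A symbol lying on the `j`-axis edge of the cube: all other coordinates extremal
and label `1`. -/
def onAxis {d L s : ℕ} (j : Fin d) (w : CSym d L s) : Prop :=
  (∀ i, i ≠ j → ((w.1 i : ℕ) = 0 ∨ (w.1 i : ℕ) = L - 1)) ∧ (w.2 : ℕ) = 0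

/-- The coordinate reflection `η_j : c_j ↦ L + 1 - c_j`. -/
def etaMap {d L s : ℕ} (j : Fin d) (w : CSym d L s) : CSym d L s :=
  ⟨fun i => if i = j then ⟨L - 1 - (w.1 j : ℕ), by have := (w.1 j).isLt; omega⟩ else w.1 i,
    w.2⟩

/-- The diagonal reflection `α_{j,k}^+` exchanging coordinates `j` and `k`. -/
def swapMap {d L s : ℕ} (j k : Fin d) (w : CSym d L s) : CSym d L s :=
  ⟨fun i => if i = j then w.1 k else if i = k then w.1 j else w.1 i, w.2⟩

/-- The anti-diagonal reflection `α_{j,k}^-`. -/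
def aswapMap {d L s : ℕ} (j k : Fin d) (w : CSym d L s) : CSym d L s :=
  ⟨fun i =>
    if i = j then ⟨L - 1 - (w.1 k : ℕ), by have := (w.1 k).isLt; omega⟩
    else if i = k then ⟨L - 1 - (w.1 j : ℕ), by have := (w.1 j).isLt; omega⟩
    else w.1 i, w.2⟩

/-- A cubical iterated graph system: a sub-system of the ambient system `𝔉(d,L,s)`
satisfying the conditions (C1)–(C4). -/
structure CubicalIGS (d L s : ℕ) where
  hd : 1 ≤ d
  hL : 3 ≤ L
  hs : 1 ≤ s
  Symb : Set (CSym d L s)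
  sys : System (↥Symb) (Fin d)
  edge_amb : ∀ x y : ↥Symb, sys.E x y → ambE (sys.typ x y) x.1 y.1
  glue_amb : ∀ (j : Fin d) (x y : ↥Symb), sys.glue j x y → ambI j x.1 y.1
  C1 : ∀ w : CSym d L s, (∃ j, onAxis j w) → w ∈ Symb
  C2 : ∀ (j : Fin d) (x y : ↥Symb), onAxis j x.1 → onAxis j y.1 → ambE j x.1 y.1 →
    sys.E x y
  C3 : ∀ (j : Fin d) (x y : ↥Symb), onAxis j x.1 → onAxis j y.1 → ambI j x.1 y.1 →
    sys.glue j x y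
  C4_eta : ∀ j : Fin d, ∃ ψ : Iso sys sys,
    ∀ x : ↥Symb, (ψ.hom.toFun x : CSym d L s) = etaMap j x.1
  C4_plus : ∀ j k : Fin d, j ≠ k → ∃ ψ : Iso sys sys,
    ∀ x : ↥Symb, (ψ.hom.toFun x : CSym d L s) = swapMap j k x.1
  C4_minus : ∀ j k : Fin d, j ≠ k → ∃ ψ : Iso sys sys,
    ∀ x : ↥Symb, (ψ.hom.toFun x : CSym d L s) = aswapMap j k x.1

/-- The corner symbol `𝐤`: first coordinate `k`, all other coordinates `1`, label `1`. -/
def cornerSym {d L s : ℕ} (cub : CubicalIGS d L s) (k : Fin L) : ↥cub.Symb :=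
  ⟨⟨fun i => if (i : ℕ) = 0 then k else ⟨0, by have := k.isLt; omega⟩,
      ⟨0, by have := cub.hs; omega⟩⟩, by
    apply cub.C1
    refine ⟨⟨0, cub.hd⟩, fun i hi => ?_, rfl⟩
    have hiv : (i : ℕ) ≠ 0 := fun h => hi (Fin.ext h)
    left
    simp [hiv]⟩

end IGSP
namespace IGSP

/-- The edge relation of the Sierpiński gasket IGS. -/
abbrev gasketE (x y : Fin 3) : Prop :=
  (x = 0 ∧ y = 1) ∨ (x = 1 ∧ y = 2) ∨ (x = 0 ∧ y = 2)

/-- The Sierpiński gasket iterated graph system. -/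
noncomputable def gasket : System (Fin 3) (Fin 3) where
  E := gasketE
  not_both := by decide
  irrefl := by decide
  conn := by
    have hadj : ∀ a b : Fin 3, a ≠ b → gasketE a b ∨ gasketE b a := by decide
    intro x y
    rcases eq_or_ne x y with rfl | h
    · exact Relation.ReflTransGen.refl
    · exact Relation.ReflTransGen.single (hadj x y h)
  typ := fun x y => if x = 0 ∧ y = 1 then 0 else if x = 1 ∧ y = 2 then 1 else 2
  typ_surj := by decide
  glue := fun t x y =>
    (t = 0 ∧ x = 1 ∧ y = 0) ∨ (t = 1 ∧ x = 2 ∧ y = 1) ∨ (t = 2 ∧ x = 2 ∧ y = 0)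
  glue_nonempty := by decide

open Fin.NatCast in
/-- The pentagonal Sierpiński carpet iterated graph system. -/
noncomputable def pentagon : System (Fin 5) (Fin 5) where
  E := fun x y => y = x + 1
  not_both := by decide
  irrefl := by decide
  conn := by
    intro x y
    have key : ∀ (k : ℕ) (z : Fin 5),
        Relation.ReflTransGen (fun a b : Fin 5 => b = a + 1 ∨ a = b + 1) z (z + (k : Fin 5)) := by
      intro k
      induction k with
      | zero => intro z; simpa using Relation.ReflTransGen.refl
      | succ n ih =>
          intro z
          have h : ((n + 1 : ℕ) : Fin 5) = ((n : ℕ) : Fin 5) + 1 := by push_cast; ring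
          rw [h, ← add_assoc]
          exact (ih z).tail (Or.inl rfl)
    have h2 := key ((y - x : Fin 5) : ℕ) x
    rw [Fin.cast_val_eq_self] at h2
    have h3 : x + (y - x) = y := by abel
    rwa [h3] at h2
  typ := fun x _ => x
  typ_surj := fun t => ⟨t, t + 1, rfl, rfl⟩
  glue := fun t x y => (x = t + 1 ∧ y = t) ∨ (x = t + 2 ∧ y = t + 4)
  glue_nonempty := fun t => ⟨t + 1, t, Or.inl ⟨rfl, rfl⟩⟩

/-- The interval iterated graph system `𝔉(1, L)`. -/
noncomputable def intervalSys (L : ℕ) (hL : 3 ≤ L) : System (Fin L) Unit where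
  E x y := (y : ℕ) = (x : ℕ) + 1
  not_both := by intro x y h h'; omega
  irrefl := by intro x h; omega
  conn := by
    have key : ∀ (k : ℕ) (hk : k < L),
        Relation.ReflTransGen (fun a b : Fin L => ((b : ℕ) = (a : ℕ) + 1) ∨ ((a : ℕ) = (b : ℕ) + 1))
          ⟨0, by omega⟩ ⟨k, hk⟩ := by
      intro k
      induction k with
      | zero => intro hk; exact Relation.ReflTransGen.refl
      | succ n ih =>
          intro hk
          exact Relation.ReflTransGen.tail (ih (by omega)) (Or.inl rfl)
    intro x y
    have hsymm : Symmetric fun a b : Fin L => ((b : ℕ) = (a : ℕ) + 1) ∨ ((a : ℕ) = (b : ℕ) + 1) :=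
      fun a b h => h.symm
    have hx := key x.val x.isLt
    have hy := key y.val y.isLt
    simp only [Fin.eta] at hx hy
    exact Relation.ReflTransGen.trans ((@Relation.ReflTransGen.stdSymm _ _ ⟨fun a b h => hsymm h⟩).symm _ _ hx) hy
  typ := fun _ _ => ()
  typ_surj := by
    intro t
    refine ⟨⟨0, by omega⟩, ⟨1, by omega⟩, rfl, ?_⟩
    cases t; rfl
  glue := fun _ x y => (x : ℕ) = L - 1 ∧ (y : ℕ) = 0
  glue_nonempty := fun _ => ⟨⟨L - 1, by omega⟩, ⟨0, by omega⟩, rfl, rfl⟩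

variable {S T : Type}

/-- A folding of `G_{k+n}` onto `w̃ · W_n`: a graph mapping into the induced subgraph on
`w̃ · W_n` which fixes `w̃ · W_n` pointwise. -/
def HasFolding [Nonempty T] (F : System S T) (k n : ℕ) (wt : Word S k) : Prop :=
  ∃ f : Word S (k + n) → Word S (k + n),
    (∀ x, ∃ u : Word S n, f x = Fin.append wt u) ∧
    (∀ u : Word S n, f (Fin.append wt u) = Fin.append wt u) ∧
    (∀ x y, adjW F (k + n) x y → f x = f y ∨ adjW F (k + n) (f x) (f y))

end IGSP


/-!
A word of length `n + m` is `u v` with `u ∈ W_n`, `v ∈ W_m`, so `G_{n+m}` is made of the copies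
`u · G_m`, an edge `(u, u')` of `G_n` of type `t` joining `u a` to `u' η_t(a)` for every
`a ∈ I_{t,+}^{(m)}`. The flow basis provides, for every `L ∈ ℒ^{(m)}`, the boundary
distribution `g_L(v) = 𝓕_{[L→L']}(v_L, v)` (`outflow`), independent of `L'` by (FB3), of total
mass one, and invariant under the flip `η_t` by (FB4).

The new flow carries `F_n(u,u') g_{I_{t,+}}(a)` along the glued edge from `u a` to `u' η_t(a)`,
and inside the copy `u` it is `∑_{u'} F_n(u,u') 𝓕_{[L_u → P(u,u')]}` restricted to `G_m`, where
`L_u = I_{𝔱(u),𝔬(u)}^{(m)}` and `P(u,u')` (`portSet`) is the part of `W_m` glued towards `u'`.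
The copy part has divergence `∑_{u'} F_n(u,u') (g_{L_u} - g_{P(u,u')})` at `v`, the glued edges
contribute `∑_{u'} F_n(u,u') g_{P(u,u')}(v)`, and `∑_{u'} F_n(u,u') = div F_n(u)`: the divergence
at `u v` is `div F_n(u) g_{L_u}(v)`. Each copy part is a sum of at most `C_deg` basis flows, so
`|∑_{i ≤ N} x_i|^q ≤ N^{q-1} ∑ |x_i|^q` bounds the energy by `C E_q(𝓕^{(m)}) E_q(F_n)`.
-/

namespace IGSP

open Finset Classical

section ReplacementGraph

variable {S T : Type}

theorem appendEquiv_apply_mk {n m : ℕ} (u : Word S n) (a : Word S m) :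
    Fin.appendEquiv n m (u, a) = Fin.append u a :=
  rfl

theorem append_inj {n m : ℕ} {u u' : Word S n} {a c : Word S m} :
    Fin.append u a = Fin.append u' c ↔ u = u' ∧ a = c := by
  rw [← Prod.mk.injEq]
  exact (Fin.appendEquiv n m).injective.eq_iff (a := (u, a)) (b := (u', c))

theorem exists_eq_snoc {L : ℕ} (w : Word S (L + 1)) : ∃ w' x, w = Fin.snoc w' x :=
  ⟨_, _, (Fin.snoc_init_self w).symm⟩

variable [Nonempty T] (F : System S T)

theorem edge_snoc {L : ℕ} (w v : Word S L) (x y : S) :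
    edge F (L + 1) (Fin.snoc w x) (Fin.snoc v y) ↔
      (w = v ∧ F.E x y) ∨ (edge F L w v ∧ F.glue (etyp F L w v) x y) := by
  cases L with
  | zero => simp [edge, replData, Subsingleton.elim w v, Fin.snoc]
  | succ L => simp [edge, etyp, replData, Fin.init_snoc]

theorem etyp_snoc {L : ℕ} (w v : Word S L) (x y : S) :
    etyp F (L + 1) (Fin.snoc w x) (Fin.snoc v y) =
      if w = v then F.typ x y else etyp F L w v := by
  cases L with
  | zero => simp [etyp, replData, Subsingleton.elim w v, Fin.snoc]
  | succ L => simp [etyp, replData, Fin.init_snoc]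

theorem edge_zero (w v : Word S 0) : ¬ edge F 0 w v := by
  simp [edge, replData]

theorem edge_asymm {L : ℕ} {w v : Word S L} (h : edge F L w v) : ¬ edge F L v w := by
  induction L with
  | zero => exact absurd h (edge_zero F w v)
  | succ L ih =>
    obtain ⟨w, x, rfl⟩ := exists_eq_snoc w
    obtain ⟨v, y, rfl⟩ := exists_eq_snoc v
    rw [edge_snoc] at h ⊢
    rintro (⟨rfl, hE⟩ | ⟨hvw, -⟩) <;> rcases h with ⟨hwv, hE'⟩ | ⟨hwv, -⟩
    · exact F.not_both _ _ hE' hE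
    · exact ih hwv hwv
    · exact ih (hwv ▸ hvw) hvw
    · exact ih hwv hvw

theorem edge_irrefl {L : ℕ} (w : Word S L) : ¬ edge F L w w :=
  fun h => edge_asymm F h h

theorem edge_append_of_edge {n m : ℕ} (u : Word S n) {a b : Word S m} (h : edge F m a b) :
    edge F (n + m) (Fin.append u a) (Fin.append u b) ∧
      etyp F (n + m) (Fin.append u a) (Fin.append u b) = etyp F m a b := by
  induction m with
  | zero => exact absurd h (edge_zero F a b)
  | succ m ih =>
    obtain ⟨a, x, rfl⟩ := exists_eq_snoc a
    obtain ⟨b, y, rfl⟩ := exists_eq_snoc b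
    change edge F (n + m + 1) _ _ ∧ etyp F (n + m + 1) _ _ = _
    rw [Fin.append_snoc, Fin.append_snoc, edge_snoc, etyp_snoc, etyp_snoc]
    rw [edge_snoc] at h
    rcases h with ⟨rfl, hE⟩ | ⟨hab, hglue⟩
    · simp [hE]
    · have hne : a ≠ b := fun h => edge_irrefl F _ (h ▸ hab)
      have hne' : Fin.append u a ≠ Fin.append u b := fun h => hne (append_inj.1 h).2
      obtain ⟨ih₁, ih₂⟩ := ih hab
      rw [if_neg hne, if_neg hne', ih₂]
      exact ⟨Or.inr ⟨ih₁, ih₂ ▸ hglue⟩, rfl⟩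

theorem edge_append_of_glue {n m : ℕ} {u u' : Word S n} (hu : u ≠ u')
    (he : edge F n u u') {a c : Word S m} (hg : ∀ i, F.glue (etyp F n u u') (a i) (c i)) :
    edge F (n + m) (Fin.append u a) (Fin.append u' c) ∧
      etyp F (n + m) (Fin.append u a) (Fin.append u' c) = etyp F n u u' := by
  induction m with
  | zero => simpa [Fin.append_right_nil] using he
  | succ m ih =>
    obtain ⟨a, x, rfl⟩ := exists_eq_snoc a
    obtain ⟨c, y, rfl⟩ := exists_eq_snoc c
    change edge F (n + m + 1) _ _ ∧ etyp F (n + m + 1) _ _ = _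
    rw [Fin.append_snoc, Fin.append_snoc, edge_snoc, etyp_snoc]
    have hne : Fin.append u a ≠ Fin.append u' c := fun h => hu (append_inj.1 h).1
    obtain ⟨ih₁, ih₂⟩ := ih (fun i => by simpa using hg (Fin.castSucc i))
    refine ⟨Or.inr ⟨ih₁, ?_⟩, by rw [if_neg hne, ih₂]⟩
    simpa [ih₂] using hg (Fin.last m)

end ReplacementGraph

section FiniteSums

theorem sum_ite_of_iff {ι : Type*} [Fintype ι] {R : ι → Prop} [DecidablePred R] {P : Prop}
    [Decidable P] {j : ι} (h : ∀ c, R c ↔ P ∧ c = j) (f : ι → ℝ) :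
    ∑ c, (if R c then f c else 0) = if P then f j else 0 := by
  by_cases hP : P <;> simp [h, hP]

theorem sum_comm₃ {ι κ ν : Type*} [Fintype ι] [Fintype κ] [Fintype ν] (f : ν → ι → κ → ℝ) :
    ∑ a, ∑ c, ∑ k, f k a c = ∑ k, ∑ a, ∑ c, f k a c :=
  (sum_congr rfl fun _ _ => sum_comm).trans sum_comm

variable {q : ℝ}

theorem abs_sum_rpow_le {ι : Type*} (hq : 1 ≤ q) (s : Finset ι) (f : ι → ℝ) :
    |∑ i ∈ s, f i| ^ q ≤ (#s : ℝ) ^ (q - 1) * ∑ i ∈ s, |f i| ^ q :=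
  (Real.rpow_le_rpow (abs_nonneg _) (abs_sum_le_sum_abs _ _) (by linarith)).trans
    (Real.rpow_sum_le_const_mul_sum_rpow s f hq)

theorem abs_sum_rpow_le_of_card_le {ι : Type*} [Fintype ι] (hq : 1 ≤ q) {s : Finset ι} {N : ℝ}
    (hN : (#s : ℝ) ≤ N) {f : ι → ℝ} (hf : ∀ i ∉ s, f i = 0) :
    |∑ i, f i| ^ q ≤ N ^ (q - 1) * ∑ i, |f i| ^ q := by
  rw [← sum_subset (subset_univ s) fun i _ hi => hf i hi]
  have hN0 : 0 ≤ N := le_trans (Nat.cast_nonneg _) hN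
  refine (abs_sum_rpow_le hq s f).trans (mul_le_mul ?_ ?_ (by positivity) (by positivity))
  · exact Real.rpow_le_rpow (by positivity) hN (by linarith)
  · exact sum_le_sum_of_subset_of_nonneg (subset_univ s) fun _ _ _ => by positivity

end FiniteSums

section Flows

variable {V : Type} [Fintype V]

noncomputable def powSum (q : ℝ) (Φ : V → V → ℝ) : ℝ := ∑ x, ∑ y, |Φ x y| ^ q

theorem energy_eq_powSum (q : ℝ) (Φ : V → V → ℝ) : energy q Φ = powSum q Φ / 2 := by
  simp only [energy, powSum, finsum_eq_sum_of_fintype]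

theorem powSum_nonneg (q : ℝ) (Φ : V → V → ℝ) : 0 ≤ powSum q Φ := by
  unfold powSum
  positivity

theorem fdiv_eq_sum (Φ : V → V → ℝ) (x : V) : fdiv Φ x = ∑ y, Φ x y :=
  finsum_eq_sum_of_fintype _

theorem totalFlow_eq_sum (A : Set V) (Φ : V → V → ℝ) :
    totalFlow A Φ = ∑ x, if x ∈ A then fdiv Φ x else 0 := by
  rw [totalFlow, finsum_mem_def, finsum_eq_sum_of_fintype]
  rfl

theorem powSum_add_sub_le {q : ℝ} (hq : 1 ≤ q) (f g h : V → V → ℝ) :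
    powSum q (fun x y => f x y + g x y - h x y) ≤
      3 ^ (q - 1) * (powSum q f + powSum q g + powSum q h) := by
  have hpt : ∀ a b c : ℝ, |a + b - c| ^ q ≤ 3 ^ (q - 1) * (|a| ^ q + |b| ^ q + |c| ^ q) := by
    intro a b c
    simpa [Fin.sum_univ_three, sub_eq_add_neg, add_assoc] using abs_sum_rpow_le hq univ ![a, b, -c]
  simp only [powSum, mul_sum, ← sum_add_distrib]
  exact sum_le_sum fun x _ => sum_le_sum fun y _ => hpt _ _ _

theorem powSum_swap {q : ℝ} (f : V → V → ℝ) : powSum q (fun x y => f y x) = powSum q f :=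
  sum_comm

theorem powSum_comp_equiv {P : Type} [Fintype P] (q : ℝ) (e : P ≃ V) (Φ : P → P → ℝ) :
    powSum q (fun x y => Φ (e.symm x) (e.symm y)) = powSum q Φ :=
  (e.symm.sum_comp (fun p => ∑ y, |Φ p (e.symm y)| ^ q)).trans
    (sum_congr rfl fun p _ => e.symm.sum_comp (fun p' => |Φ p p'| ^ q))

end Flows

section Gluing

variable {S T : Type}

theorem Iset_nonempty (F : System S T) (t : T) (b : Bool) : (Iset F t b).Nonempty := by
  obtain ⟨x, y, hxy⟩ := F.glue_nonempty t
  cases b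
  exacts [⟨y, x, hxy⟩, ⟨x, y, hxy⟩]

variable {F : System S T} {m : ℕ}

theorem IsetW_ne_IsetW_not (h3 : GR3 F) (hm : 1 ≤ m) (t : T) (b : Bool) :
    IsetW F t b m ≠ IsetW F t (!b) m := by
  intro h
  obtain ⟨s, hs⟩ := Iset_nonempty F t b
  have hs' : (fun _ => s : Word S m) ∈ IsetW F t (!b) m := h ▸ fun _ => hs
  cases b
  exacts [(h3 t).subset ⟨hs, hs' ⟨0, hm⟩⟩, (h3 t).subset ⟨hs' ⟨0, hm⟩, hs⟩]

theorem IsetW_mem_scriptL [Nonempty T] (t : T) (b : Bool) : IsetW F t b m ∈ scriptL F m :=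
  ⟨t, b, rfl⟩

theorem exists_ne_mem_scriptL [Nonempty T] (h3 : GR3 F) (hm : 1 ≤ m) {L : Set (Word S m)}
    (hL : L ∈ scriptL F m) : ∃ L₂ ∈ scriptL F m, L ≠ L₂ := by
  obtain ⟨t, b, rfl⟩ := hL
  exact ⟨_, IsetW_mem_scriptL t !b, IsetW_ne_IsetW_not h3 hm t b⟩

def flipWord (η : Iso F F) (w : Word S m) : Word S m := fun i => η.hom.toFun (w i)

variable {t : T} {η : Iso F F}

theorem flipWord_mem (hη : IsFlip F t η) {b : Bool} {w : Word S m} (hw : w ∈ IsetW F t b m) :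
    flipWord η w ∈ IsetW F t (!b) m := by
  intro i
  cases b
  exacts [⟨w i, hη.2 _ (hw i)⟩, ⟨w i, hη.1 _ (hw i)⟩]

theorem forall_glue_iff_plus (h1 : GR1 F) (hη : IsFlip F t η) (a c : Word S m) :
    (∀ i, F.glue t (a i) (c i)) ↔ a ∈ IsetW F t true m ∧ c = flipWord η a := by
  refine ⟨fun hg => ?_, fun ⟨ha, hc⟩ i => hc ▸ hη.1 _ (ha i)⟩
  have ha : a ∈ IsetW F t true m := fun i => ⟨c i, hg i⟩
  exact ⟨ha, funext fun i => (h1 t (a i)).1 (hg i) (hη.1 _ (ha i))⟩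

theorem forall_glue_iff_minus (h1 : GR1 F) (hη : IsFlip F t η) (a c : Word S m) :
    (∀ i, F.glue t (c i) (a i)) ↔ a ∈ IsetW F t false m ∧ c = flipWord η a := by
  refine ⟨fun hg => ?_, fun ⟨ha, hc⟩ i => hc ▸ hη.2 _ (ha i)⟩
  have ha : a ∈ IsetW F t false m := fun i => ⟨c i, hg i⟩
  exact ⟨ha, funext fun i => (h1 t (a i)).2 (hg i) (hη.2 _ (ha i))⟩

end Gluing

section PendantGraph

variable {S T : Type} [Fintype S] [Nonempty T] {F : System S T} {m : ℕ}

noncomputable instance : Fintype (AddedV F m) := by unfold AddedV; infer_instance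

noncomputable instance : Fintype (TildeV F m) := by unfold TildeV; infer_instance

/-- An `abbrev`, so that `rw` sees `(pendant hL hv).1.2` as `v`. -/
abbrev pendant {L : Set (Word S m)} (hL : L ∈ scriptL F m) {v : Word S m} (hv : v ∈ L) :
    AddedV F m :=
  ⟨(L, v), hL, hv⟩

theorem sum_pendant_ite {L : Set (Word S m)} (hL : L ∈ scriptL F m) (v : Word S m) (c : ℝ) :
    ∑ pr : AddedV F m, (if pr.1 = (L, v) then c else 0) = if v ∈ L then c else 0 := by
  by_cases hv : v ∈ L
  · have hiff : ∀ pr : AddedV F m, pr.1 = (L, v) ↔ pr = pendant hL hv :=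
      fun pr => ⟨fun h => Subtype.ext h, fun h => h ▸ rfl⟩
    simp [hiff, hv]
  · rw [if_neg hv]
    refine sum_eq_zero fun pr _ => if_neg fun h => hv ?_
    simpa [h] using pr.2.2

theorem sum_tildeV (f : TildeV F m → ℝ) :
    ∑ x, f x = ∑ v, f (Sum.inl v) + ∑ pr, f (Sum.inr pr) :=
  Fintype.sum_sum_type f

theorem fdiv_inr {Φ : TildeV F m → TildeV F m → ℝ} (hΦ : Antisym (tildeG F m) Φ)
    (pr : AddedV F m) : fdiv Φ (Sum.inr pr) = Φ (Sum.inr pr) (Sum.inl pr.1.2) := by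
  unfold fdiv
  rw [finsum_eq_sum_of_fintype, sum_tildeV, Fintype.sum_eq_single pr.1.2, sum_eq_zero,
    add_zero]
  · exact fun _ _ => hΦ.2 _ _ id
  · exact fun w hw => hΦ.2 _ _ fun h => hw (Eq.symm h)

theorem totalFlow_tildeSet (Φ : TildeV F m → TildeV F m → ℝ) (L : Set (Word S m)) :
    totalFlow (tildeSet F m L) Φ =
      ∑ pr : AddedV F m, if pr.1.1 = L then fdiv Φ (Sum.inr pr) else 0 := by
  rw [totalFlow_eq_sum, sum_tildeV]
  refine (add_eq_right.2 (sum_eq_zero fun v _ => if_neg ?_)).trans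
    (sum_congr rfl fun pr _ => if_congr ?_ rfl rfl)
  · rintro ⟨pr, -, h⟩
    exact Sum.inl_ne_inr h
  · exact ⟨fun ⟨pr', h, hpr⟩ => Sum.inr_injective hpr ▸ h, fun h => ⟨pr, h, rfl⟩⟩

theorem sum_inl_rpow_le_powSum (q : ℝ) (Φ : TildeV F m → TildeV F m → ℝ) :
    ∑ a, ∑ y, |Φ (Sum.inl a) y| ^ q ≤ powSum q Φ := by
  rw [powSum, sum_tildeV]
  exact le_add_of_nonneg_right (by positivity)

theorem powSum_inl_le (q : ℝ) (Φ : TildeV F m → TildeV F m → ℝ) :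
    powSum q (fun a c : Word S m => Φ (Sum.inl a) (Sum.inl c)) ≤ powSum q Φ := by
  refine le_trans (sum_le_sum fun a _ => ?_) (sum_inl_rpow_le_powSum q Φ)
  rw [sum_tildeV]
  exact le_add_of_nonneg_right (by positivity)

end PendantGraph

section FlowBasis

variable {S T : Type} [Fintype S] [Nonempty T] {F : System S T} {m : ℕ}
variable {ηfam : T → Iso F F} (FB : FlowBasis F ηfam m)

/-- The value `𝓕_{[L→L']}(v_L, v)` for some `L' ≠ L`; by (FB3) it does not depend on `L'`. -/
noncomputable def outflow (L : Set (Word S m)) (v : Word S m) : ℝ :=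
  if h : L ∈ scriptL F m ∧ v ∈ L ∧ ∃ L₂ ∈ scriptL F m, L ≠ L₂ then
    FB.flow L h.2.2.choose h.1 h.2.2.choose_spec.1 h.2.2.choose_spec.2
      (Sum.inr (pendant h.1 h.2.1)) (Sum.inl v)
  else 0

theorem outflow_of_notMem {L : Set (Word S m)} {v : Word S m} (hv : v ∉ L) :
    outflow FB L v = 0 :=
  dif_neg fun h => hv h.2.1

theorem ite_mem_outflow (L : Set (Word S m)) (v : Word S m) :
    (if v ∈ L then outflow FB L v else 0) = outflow FB L v := by
  split_ifs with hv
  exacts [rfl, (outflow_of_notMem FB hv).symm]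

theorem flow_pendant_out {L₁ L₂ : Set (Word S m)} (h₁ : L₁ ∈ scriptL F m)
    (h₂ : L₂ ∈ scriptL F m) (hne : L₁ ≠ L₂) (pr : AddedV F m) (hpr : pr.1.1 = L₁) :
    FB.flow L₁ L₂ h₁ h₂ hne (Sum.inr pr) (Sum.inl pr.1.2) = outflow FB L₁ pr.1.2 := by
  obtain ⟨⟨L, v⟩, hL, hv⟩ := pr
  subst hpr
  have h : L ∈ scriptL F m ∧ v ∈ L ∧ ∃ L₂ ∈ scriptL F m, L ≠ L₂ := ⟨hL, hv, L₂, h₂, hne⟩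
  rw [outflow, dif_pos h]
  exact FB.fb3_out _ _ _ _ _ _ _ _ _ rfl

/-- (FB3) moves the source to `I_{t,-b}`, where (FB4) turns the inflow into an outflow. -/
theorem flow_pendant_in (h3 : GR3 F) (hm : 1 ≤ m) {L₁ L₂ : Set (Word S m)}
    (h₁ : L₁ ∈ scriptL F m) (h₂ : L₂ ∈ scriptL F m) (hne : L₁ ≠ L₂) (pr : AddedV F m)
    (hpr : pr.1.1 = L₂) :
    FB.flow L₁ L₂ h₁ h₂ hne (Sum.inl pr.1.2) (Sum.inr pr) = outflow FB L₂ pr.1.2 := by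
  obtain ⟨t, b, rfl⟩ := id h₂
  have hne' := IsetW_ne_IsetW_not h3 hm t b
  rw [FB.fb3_in _ L₁ (IsetW F t (!b) m) h₂ h₁ (IsetW_mem_scriptL t !b) hne hne'.symm pr hpr,
    ← FB.fb4_sym t b (IsetW_mem_scriptL t b) (IsetW_mem_scriptL t !b) hne' hne'.symm pr hpr]
  exact flow_pendant_out FB _ _ hne' pr hpr

theorem outflow_flipWord (h3 : GR3 F) (hm : 1 ≤ m) (hflip : ∀ t, IsFlip F t (ηfam t))
    {t : T} {b : Bool} {v : Word S m} (hv : v ∈ IsetW F t b m) :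
    outflow FB (IsetW F t b m) v = outflow FB (IsetW F t (!b) m) (flipWord (ηfam t) v) := by
  have hne := IsetW_ne_IsetW_not h3 hm t b
  have hv' := flipWord_mem (hflip t) hv
  have h₁ := IsetW_mem_scriptL (F := F) (m := m) t b
  have h₂ := IsetW_mem_scriptL (F := F) (m := m) t !b
  exact (flow_pendant_out FB h₁ h₂ hne (pendant h₁ hv) rfl).symm.trans
    ((FB.fb4_flip t b h₁ h₂ hne _ (pendant h₂ hv') rfl rfl rfl).trans
      (flow_pendant_in FB h3 hm h₁ h₂ hne (pendant h₂ hv') rfl))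

theorem sum_outflow (h3 : GR3 F) (hm : 1 ≤ m) {L : Set (Word S m)} (hL : L ∈ scriptL F m) :
    ∑ v, outflow FB L v = 1 := by
  obtain ⟨L₂, h₂, hne⟩ := exists_ne_mem_scriptL h3 hm hL
  have hunit := FB.flow_unit L L₂ hL h₂ hne
  rw [totalFlow_tildeSet] at hunit
  simp only [fdiv_inr (FB.flow_isFlow L L₂ hL h₂ hne).1] at hunit
  rw [← hunit]
  calc ∑ v, outflow FB L v
      = ∑ v, ∑ pr : AddedV F m, if pr.1 = (L, v) then outflow FB L v else 0 := by
        simp only [sum_pendant_ite hL, ite_mem_outflow]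
    _ = ∑ pr : AddedV F m, if pr.1.1 = L then outflow FB L pr.1.2 else 0 := by
        rw [sum_comm]
        exact sum_congr rfl fun pr _ => sum_ite_of_iff (fun v => by simp [Prod.ext_iff, eq_comm]) _
    _ = _ := sum_congr rfl fun pr _ => by
        split_ifs with h
        exacts [(flow_pendant_out FB hL h₂ hne pr h).symm, rfl]

theorem energy_le_basisEnergy (q : ℝ) {L₁ L₂ : Set (Word S m)} (h₁ : L₁ ∈ scriptL F m)
    (h₂ : L₂ ∈ scriptL F m) (hne : L₁ ≠ L₂) :
    energy q (FB.flow L₁ L₂ h₁ h₂ hne) ≤ basisEnergy q FB := by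
  refine le_csSup (BddAbove.mono ?_ (Set.finite_range fun P : Set (Word S m) × Set (Word S m) =>
    if h : P.1 ∈ scriptL F m ∧ P.2 ∈ scriptL F m ∧ P.1 ≠ P.2 then
      energy q (FB.flow _ _ h.1 h.2.1 h.2.2) else 0).bddAbove) ⟨L₁, L₂, h₁, h₂, hne, rfl⟩
  rintro _ ⟨L₁, L₂, h₁, h₂, hne, rfl⟩
  exact ⟨(L₁, L₂), dif_pos ⟨h₁, h₂, hne⟩⟩

theorem basisEnergy_nonneg (h3 : GR3 F) (hm : 1 ≤ m) (q : ℝ) : 0 ≤ basisEnergy q FB := by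
  obtain ⟨t⟩ := ‹Nonempty T›
  refine le_trans ?_ (energy_le_basisEnergy FB q (IsetW_mem_scriptL t true)
    (IsetW_mem_scriptL t false) (IsetW_ne_IsetW_not h3 hm t true))
  rw [energy_eq_powSum]
  exact div_nonneg (powSum_nonneg q _) zero_le_two

theorem sum_rpow_outflow_le (h3 : GR3 F) (hm : 1 ≤ m) {q : ℝ} (hq : 0 < q)
    {L : Set (Word S m)} (hL : L ∈ scriptL F m) :
    ∑ v, |outflow FB L v| ^ q ≤ 2 * basisEnergy q FB := by
  obtain ⟨L₂, h₂, hne⟩ := exists_ne_mem_scriptL h3 hm hL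
  have hΦ := (FB.flow_isFlow L L₂ hL h₂ hne).1
  have hrow : ∀ v, |outflow FB L v| ^ q ≤ ∑ y, |FB.flow L L₂ hL h₂ hne (Sum.inl v) y| ^ q := by
    intro v
    by_cases hv : v ∈ L
    · have hval : |outflow FB L v| ^ q =
          |FB.flow L L₂ hL h₂ hne (Sum.inl v) (Sum.inr (pendant hL hv))| ^ q := by
        rw [hΦ.1 (Sum.inl v) (Sum.inr (pendant hL hv)), abs_neg,
          flow_pendant_out FB hL h₂ hne (pendant hL hv) rfl]
      rw [hval]
      exact single_le_sum (f := fun y => |FB.flow L L₂ hL h₂ hne (Sum.inl v) y| ^ q)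
        (fun _ _ => by positivity) (mem_univ _)
    · rw [outflow_of_notMem FB hv, abs_zero, Real.zero_rpow hq.ne']
      positivity
  calc ∑ v, |outflow FB L v| ^ q
      ≤ ∑ v, ∑ y, |FB.flow L L₂ hL h₂ hne (Sum.inl v) y| ^ q := sum_le_sum fun v _ => hrow v
    _ ≤ powSum q (FB.flow L L₂ hL h₂ hne) := sum_inl_rpow_le_powSum q _
    _ ≤ 2 * basisEnergy q FB := by
      linarith [energy_le_basisEnergy FB q hL h₂ hne, energy_eq_powSum q (FB.flow L L₂ hL h₂ hne)]

noncomputable def restrictFlow (L₁ L₂ : Set (Word S m)) : Word S m → Word S m → ℝ :=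
  if h : L₁ ∈ scriptL F m ∧ L₂ ∈ scriptL F m ∧ L₁ ≠ L₂ then
    fun a c => FB.flow L₁ L₂ h.1 h.2.1 h.2.2 (Sum.inl a) (Sum.inl c)
  else 0

omit [Fintype S] in
theorem restrictFlow_antisym (L₁ L₂ : Set (Word S m)) :
    Antisym (replGraph F m) (restrictFlow FB L₁ L₂) := by
  unfold restrictFlow
  split_ifs with h
  · obtain ⟨hanti, hsupp⟩ := (FB.flow_isFlow _ _ h.1 h.2.1 h.2.2).1
    exact ⟨fun a c => hanti _ _, fun a c hac => hsupp _ _ hac⟩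
  · exact ⟨fun _ _ => by simp, fun _ _ _ => rfl⟩

theorem flow_inl_inr (h3 : GR3 F) (hm : 1 ≤ m) {L₁ L₂ : Set (Word S m)} (h₁ : L₁ ∈ scriptL F m)
    (h₂ : L₂ ∈ scriptL F m) (hne : L₁ ≠ L₂) (v : Word S m) (pr : AddedV F m) :
    FB.flow L₁ L₂ h₁ h₂ hne (Sum.inl v) (Sum.inr pr) =
      (if pr.1 = (L₂, v) then outflow FB L₂ v else 0) -
        (if pr.1 = (L₁, v) then outflow FB L₁ v else 0) := by
  have hΦ := (FB.flow_isFlow L₁ L₂ h₁ h₂ hne).1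
  by_cases hv : pr.1.2 = v
  swap
  · have hv' : ∀ L, pr.1 ≠ (L, v) := fun L h => hv (by rw [h])
    rw [hΦ.2 (Sum.inl v) (Sum.inr pr) fun h => hv h, if_neg (hv' _), if_neg (hv' _), sub_zero]
  subst hv
  by_cases hL₁ : pr.1.1 = L₁
  · have hL₂ : pr.1 ≠ (L₂, pr.1.2) := fun h => hne (hL₁ ▸ congrArg Prod.fst h)
    rw [if_neg hL₂, if_pos (show pr.1 = (L₁, pr.1.2) from Prod.ext hL₁ rfl),
      hΦ.1 (Sum.inl pr.1.2) (Sum.inr pr), flow_pendant_out FB h₁ h₂ hne pr hL₁]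
    ring
  by_cases hL₂ : pr.1.1 = L₂
  · rw [if_pos (show pr.1 = (L₂, pr.1.2) from Prod.ext hL₂ rfl),
      if_neg fun h => hL₁ (congrArg Prod.fst h), sub_zero]
    exact flow_pendant_in FB h3 hm h₁ h₂ hne pr hL₂
  · rw [if_neg fun h => hL₂ (congrArg Prod.fst h), if_neg fun h => hL₁ (congrArg Prod.fst h),
      hΦ.1 (Sum.inl pr.1.2) (Sum.inr pr), FB.fb2 _ _ h₁ h₂ hne pr hL₁ hL₂]
    simp

theorem sum_restrictFlow (h3 : GR3 F) (hm : 1 ≤ m) {L₁ L₂ : Set (Word S m)}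
    (h₁ : L₁ ∈ scriptL F m) (h₂ : L₂ ∈ scriptL F m) (v : Word S m) :
    ∑ c, restrictFlow FB L₁ L₂ v c = outflow FB L₁ v - outflow FB L₂ v := by
  by_cases hne : L₁ = L₂
  · simp [restrictFlow, hne]
  have hcons := (FB.flow_isFlow L₁ L₂ h₁ h₂ hne).2 (Sum.inl v) fun h =>
    h.elim (fun ⟨_, _, h⟩ => Sum.inl_ne_inr h) (fun ⟨_, _, h⟩ => Sum.inl_ne_inr h)
  unfold fdiv at hcons
  rw [finsum_eq_sum_of_fintype, sum_tildeV] at hcons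
  simp only [flow_inl_inr FB h3 hm h₁ h₂ hne, sum_sub_distrib, sum_pendant_ite h₁,
    sum_pendant_ite h₂, ite_mem_outflow] at hcons
  simp only [restrictFlow, dif_pos (⟨h₁, h₂, hne⟩ : _ ∧ _ ∧ _)]
  linarith

theorem powSum_restrictFlow_le (h3 : GR3 F) (hm : 1 ≤ m) {q : ℝ} (hq : 0 < q)
    (L₁ L₂ : Set (Word S m)) :
    powSum q (restrictFlow FB L₁ L₂) ≤ 2 * basisEnergy q FB := by
  unfold restrictFlow
  split_ifs with h
  · refine (powSum_inl_le q _).trans ?_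
    linarith [energy_le_basisEnergy FB q h.1 h.2.1 h.2.2,
      energy_eq_powSum q (FB.flow _ _ h.1 h.2.1 h.2.2)]
  · simp only [powSum, Pi.zero_apply, abs_zero, Real.zero_rpow hq.ne', sum_const_zero]
    linarith [basisEnergy_nonneg FB h3 hm q]

end FlowBasis

section ReplacementFlow

variable {S T : Type} [Fintype S] [Nonempty T] {F : System S T} {ηfam : T → Iso F F} {n m : ℕ}
variable (FB : FlowBasis F ηfam m) (tA : Word S n → T) (oA : Word S n → Bool)
  (Fn : Word S n → Word S n → ℝ) {q : ℝ}

/-- The set `I_{t,±}^{(m)}` through which the copy `u · W_m` is glued towards `u' · W_m`; its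
value for non-adjacent `u, u'` plays no role, since then `Fn u u' = 0`. -/
noncomputable def portSet (F : System S T) (m : ℕ) (u u' : Word S n) : Set (Word S m) :=
  if edge F n u' u then IsetW F (etyp F n u' u) false m else IsetW F (etyp F n u u') true m

noncomputable def copyFlow (u : Word S n) (a c : Word S m) : ℝ :=
  ∑ u', Fn u u' * restrictFlow FB (IsetW F (tA u) (oA u) m) (portSet F m u u') a c

noncomputable def crossFlow (u u' : Word S n) (a c : Word S m) : ℝ :=
  if edge F n u u' ∧ ∀ i, F.glue (etyp F n u u') (a i) (c i) then
    Fn u u' * outflow FB (IsetW F (etyp F n u u') true m) a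
  else 0

noncomputable def prodFlow (p p' : Word S n × Word S m) : ℝ :=
  (if p.1 = p'.1 then copyFlow FB tA oA Fn p.1 p.2 p'.2 else 0) +
    crossFlow FB Fn p.1 p'.1 p.2 p'.2 - crossFlow FB Fn p'.1 p.1 p'.2 p.2

noncomputable def replFlow (x y : Word S (n + m)) : ℝ :=
  prodFlow FB tA oA Fn ((Fin.appendEquiv n m).symm x) ((Fin.appendEquiv n m).symm y)

theorem replFlow_append (u u' : Word S n) (a c : Word S m) :
    replFlow FB tA oA Fn (Fin.append u a) (Fin.append u' c) =
      prodFlow FB tA oA Fn (u, a) (u', c) := by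
  simp [replFlow]

omit [Fintype S] in
theorem portSet_mem_scriptL (u u' : Word S n) : portSet F m u u' ∈ scriptL F m := by
  unfold portSet
  split_ifs <;> exact IsetW_mem_scriptL _ _

theorem copyFlow_antisym (u : Word S n) (a c : Word S m) :
    copyFlow FB tA oA Fn u a c = - copyFlow FB tA oA Fn u c a := by
  simp only [copyFlow, ← sum_neg_distrib, ← mul_neg, (restrictFlow_antisym FB _ _).1 a c]

theorem copyFlow_eq_zero {a c : Word S m} (h : ¬ (replGraph F m).Adj a c) (u : Word S n) :
    copyFlow FB tA oA Fn u a c = 0 :=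
  sum_eq_zero fun u' _ => by rw [(restrictFlow_antisym FB _ _).2 a c h, mul_zero]

theorem crossFlow_eq_zero {u u' : Word S n} {a c : Word S m}
    (h : ¬ edge F (n + m) (Fin.append u a) (Fin.append u' c)) : crossFlow FB Fn u u' a c = 0 :=
  if_neg fun ⟨he, hg⟩ =>
    h (edge_append_of_glue F (fun h : u = u' => edge_irrefl F u (h ▸ he)) he hg).1

theorem prodFlow_antisym (p p' : Word S n × Word S m) :
    prodFlow FB tA oA Fn p p' = - prodFlow FB tA oA Fn p' p := by
  unfold prodFlow
  by_cases h : p.1 = p'.1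
  · rw [if_pos h, if_pos h.symm, h, copyFlow_antisym]
    ring
  · rw [if_neg h, if_neg (Ne.symm h)]
    ring

theorem prodFlow_eq_zero {u u' : Word S n} {a c : Word S m}
    (h : ¬ (replGraph F (n + m)).Adj (Fin.append u a) (Fin.append u' c)) :
    prodFlow FB tA oA Fn (u, a) (u', c) = 0 := by
  by_cases heq : Fin.append u a = Fin.append u' c
  · obtain ⟨rfl, rfl⟩ := append_inj.1 heq
    linarith [prodFlow_antisym FB tA oA Fn (u, a) (u, a)]
  have hnadj : ¬ adjW F (n + m) (Fin.append u a) (Fin.append u' c) := fun h' => h ⟨heq, h'⟩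
  unfold prodFlow
  rw [crossFlow_eq_zero FB Fn fun h' => hnadj (Or.inl h'),
    crossFlow_eq_zero FB Fn fun h' => hnadj (Or.inr h'), sub_zero, add_zero]
  split_ifs with hu
  · subst hu
    refine copyFlow_eq_zero FB tA oA Fn (fun ⟨_, hadj⟩ => hnadj ?_) u
    exact hadj.imp (edge_append_of_edge F u · |>.1) (edge_append_of_edge F u · |>.1)
  · rfl

theorem replFlow_antisym : Antisym (replGraph F (n + m)) (replFlow FB tA oA Fn) := by
  refine ⟨fun x y => prodFlow_antisym FB tA oA Fn _ _, fun x y h => ?_⟩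
  obtain ⟨⟨u, a⟩, rfl⟩ := (Fin.appendEquiv n m).surjective x
  obtain ⟨⟨u', c⟩, rfl⟩ := (Fin.appendEquiv n m).surjective y
  rw [replFlow, Equiv.symm_apply_apply, Equiv.symm_apply_apply]
  exact prodFlow_eq_zero FB tA oA Fn h

theorem sum_copyFlow (h3 : GR3 F) (hm : 1 ≤ m) (u : Word S n) (v : Word S m) :
    ∑ c, copyFlow FB tA oA Fn u v c =
      ∑ u', Fn u u' *
        (outflow FB (IsetW F (tA u) (oA u) m) v - outflow FB (portSet F m u u') v) := by
  simp only [copyFlow]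
  rw [sum_comm]
  simp only [← mul_sum, sum_restrictFlow FB h3 hm (IsetW_mem_scriptL _ _) (portSet_mem_scriptL _ _)]

theorem sum_crossFlow_out (h1 : GR1 F) (hflip : ∀ t, IsFlip F t (ηfam t)) (u u' : Word S n)
    (v : Word S m) :
    ∑ c, crossFlow FB Fn u u' v c =
      if edge F n u u' then Fn u u' * outflow FB (IsetW F (etyp F n u u') true m) v else 0 := by
  unfold crossFlow
  by_cases he : edge F n u u'
  · simp only [he, true_and, if_true]
    rw [sum_ite_of_iff (forall_glue_iff_plus h1 (hflip _) v)]
    split_ifs with hv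
    · rfl
    · rw [outflow_of_notMem FB hv, mul_zero]
  · simp [he]

theorem sum_crossFlow_in (h1 : GR1 F) (h3 : GR3 F) (hm : 1 ≤ m)
    (hflip : ∀ t, IsFlip F t (ηfam t)) (u u' : Word S n) (v : Word S m) :
    ∑ c, crossFlow FB Fn u' u c v =
      if edge F n u' u then Fn u' u * outflow FB (IsetW F (etyp F n u' u) false m) v else 0 := by
  unfold crossFlow
  by_cases he : edge F n u' u
  · simp only [he, true_and, if_true]
    rw [sum_ite_of_iff (forall_glue_iff_minus h1 (hflip _) v)]
    split_ifs with hv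
    · rw [outflow_flipWord FB h3 hm hflip hv]
      rfl
    · rw [outflow_of_notMem FB hv, mul_zero]
  · simp [he]

theorem sum_crossFlow_sub (h1 : GR1 F) (h3 : GR3 F) (hm : 1 ≤ m)
    (hflip : ∀ t, IsFlip F t (ηfam t)) (hFn : Antisym (replGraph F n) Fn) (u u' : Word S n)
    (v : Word S m) :
    ∑ c, (crossFlow FB Fn u u' v c - crossFlow FB Fn u' u c v) =
      Fn u u' * outflow FB (portSet F m u u') v := by
  rw [sum_sub_distrib, sum_crossFlow_out FB Fn h1 hflip,
    sum_crossFlow_in FB Fn h1 h3 hm hflip, portSet]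
  by_cases he : edge F n u u'
  · rw [if_pos he, if_neg (edge_asymm F he), if_neg (edge_asymm F he), sub_zero]
  by_cases he' : edge F n u' u
  · rw [if_neg he, if_pos he', if_pos he', hFn.1 u u']
    ring
  · rw [if_neg he, if_neg he', hFn.2 u u' fun h => h.2.elim he he']
    simp

theorem fdiv_replFlow (h1 : GR1 F) (h3 : GR3 F) (hm : 1 ≤ m) (hflip : ∀ t, IsFlip F t (ηfam t))
    (hFn : Antisym (replGraph F n) Fn) (u : Word S n) (v : Word S m) :
    fdiv (replFlow FB tA oA Fn) (Fin.append u v) =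
      fdiv Fn u * outflow FB (IsetW F (tA u) (oA u) m) v := by
  rw [fdiv_eq_sum, fdiv_eq_sum, ← (Fin.appendEquiv n m).sum_comp, Fintype.sum_prod_type]
  have hdiag : ∀ u', ∑ c, (if u = u' then copyFlow FB tA oA Fn u v c else 0) =
      if u = u' then ∑ c, copyFlow FB tA oA Fn u v c else 0 := by
    intro u'
    split_ifs <;> simp
  simp only [appendEquiv_apply_mk, replFlow_append, prodFlow, add_sub_assoc, sum_add_distrib,
    hdiag, sum_ite_eq, mem_univ, if_true, sum_copyFlow FB tA oA Fn h3 hm,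
    sum_crossFlow_sub FB Fn h1 h3 hm hflip hFn]
  rw [← sum_add_distrib, sum_mul]
  exact sum_congr rfl fun u' _ => by ring

/-- The set `A_{n+m}` of the paper, built from `A = A_n`. -/
def liftSet (F : System S T) (m : ℕ) (tA : Word S n → T) (oA : Word S n → Bool)
    (A : Set (Word S n)) : Set (Word S (n + m)) :=
  {x | ∃ u ∈ A, ∃ v : Word S m, (∀ i, v i ∈ Iset F (tA u) (oA u)) ∧ x = Fin.append u v}

omit [Fintype S] [Nonempty T] in
theorem append_mem_liftSet {A : Set (Word S n)} {u : Word S n} {v : Word S m} :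
    Fin.append u v ∈ liftSet F m tA oA A ↔ u ∈ A ∧ v ∈ IsetW F (tA u) (oA u) m := by
  refine ⟨fun ⟨u', hu', v', hv', h⟩ => ?_, fun ⟨hu, hv⟩ => ⟨u, hu, v, hv, rfl⟩⟩
  obtain ⟨rfl, rfl⟩ := append_inj.1 h
  exact ⟨hu', hv'⟩

theorem totalFlow_replFlow (h1 : GR1 F) (h3 : GR3 F) (hm : 1 ≤ m)
    (hflip : ∀ t, IsFlip F t (ηfam t)) (hFn : Antisym (replGraph F n) Fn) (A : Set (Word S n)) :
    totalFlow (liftSet F m tA oA A) (replFlow FB tA oA Fn) = totalFlow A Fn := by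
  rw [totalFlow_eq_sum, totalFlow_eq_sum, ← (Fin.appendEquiv n m).sum_comp, Fintype.sum_prod_type]
  refine sum_congr rfl fun u _ => ?_
  simp only [appendEquiv_apply_mk, append_mem_liftSet, fdiv_replFlow FB tA oA Fn h1 h3 hm hflip hFn]
  by_cases hu : u ∈ A
  · simp only [hu, true_and, if_true]
    calc ∑ v, (if v ∈ IsetW F (tA u) (oA u) m then
          fdiv Fn u * outflow FB (IsetW F (tA u) (oA u) m) v else 0)
        = ∑ v, fdiv Fn u * outflow FB (IsetW F (tA u) (oA u) m) v := sum_congr rfl fun v _ => by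
          split_ifs with hv
          exacts [rfl, by rw [outflow_of_notMem FB hv, mul_zero]]
      _ = fdiv Fn u := by rw [← mul_sum, sum_outflow FB h3 hm (IsetW_mem_scriptL _ _), mul_one]
  · simp [hu]

theorem card_adj_le {Cdeg : ℕ} (hdeg : ∀ (l : ℕ) (w : Word S l), degGm F l w ≤ Cdeg)
    (u : Word S n) : (#(univ.filter ((replGraph F n).Adj u)) : ℝ) ≤ Cdeg := by
  have hcard : #(univ.filter ((replGraph F n).Adj u)) ≤ degGm F n u := by
    rw [← Set.ncard_coe_finset]
    exact Set.ncard_le_ncard (fun v hv => (by simpa using hv : (replGraph F n).Adj u v).2)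
      (Set.toFinite _)
  exact_mod_cast hcard.trans (hdeg n u)

theorem powSum_copyFlow_le (h3 : GR3 F) (hm : 1 ≤ m) (hq : 1 ≤ q) {Cdeg : ℕ}
    (hdeg : ∀ (l : ℕ) (w : Word S l), degGm F l w ≤ Cdeg) (hFn : Antisym (replGraph F n) Fn)
    (u : Word S n) :
    powSum q (copyFlow FB tA oA Fn u) ≤
      (Cdeg : ℝ) ^ (q - 1) * (2 * basisEnergy q FB) * ∑ u', |Fn u u'| ^ q := by
  have hpt : ∀ a c, |copyFlow FB tA oA Fn u a c| ^ q ≤ ∑ u', (Cdeg : ℝ) ^ (q - 1) *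
      |Fn u u'| ^ q * |restrictFlow FB (IsetW F (tA u) (oA u) m) (portSet F m u u') a c| ^ q := by
    intro a c
    refine (abs_sum_rpow_le_of_card_le hq (card_adj_le hdeg u) fun u' hu' => ?_).trans ?_
    · rw [hFn.2 u u' (by simpa using hu'), zero_mul]
    · simp only [mul_sum, abs_mul, Real.mul_rpow (abs_nonneg _) (abs_nonneg _), mul_assoc]
      exact le_rfl
  calc powSum q (copyFlow FB tA oA Fn u)
      ≤ ∑ a, ∑ c, ∑ u', (Cdeg : ℝ) ^ (q - 1) * |Fn u u'| ^ q *
          |restrictFlow FB (IsetW F (tA u) (oA u) m) (portSet F m u u') a c| ^ q :=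
        sum_le_sum fun a _ => sum_le_sum fun c _ => hpt a c
    _ = ∑ u', (Cdeg : ℝ) ^ (q - 1) * |Fn u u'| ^ q *
          powSum q (restrictFlow FB (IsetW F (tA u) (oA u) m) (portSet F m u u')) := by
        rw [sum_comm₃]
        simp only [powSum, mul_sum]
    _ ≤ ∑ u', (Cdeg : ℝ) ^ (q - 1) * |Fn u u'| ^ q * (2 * basisEnergy q FB) :=
        sum_le_sum fun u' _ => mul_le_mul_of_nonneg_left
          (powSum_restrictFlow_le FB h3 hm (by linarith) _ _) (by positivity)
    _ = _ := by
        rw [mul_sum]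
        exact sum_congr rfl fun _ _ => by ring

theorem sum_rpow_crossFlow_le (h1 : GR1 F) (h3 : GR3 F) (hm : 1 ≤ m)
    (hflip : ∀ t, IsFlip F t (ηfam t)) (hq : 0 < q) (u u' : Word S n) :
    ∑ a, ∑ c, |crossFlow FB Fn u u' a c| ^ q ≤ 2 * basisEnergy q FB * |Fn u u'| ^ q := by
  set L := IsetW F (etyp F n u u') true m
  have hpt : ∀ a, ∑ c, |crossFlow FB Fn u u' a c| ^ q ≤ |Fn u u'| ^ q * |outflow FB L a| ^ q := by
    intro a
    rw [← Real.mul_rpow (abs_nonneg _) (abs_nonneg _), ← abs_mul]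
    unfold crossFlow
    by_cases he : edge F n u u'
    · simp only [he, true_and, apply_ite (fun x : ℝ => |x| ^ q), abs_zero, Real.zero_rpow hq.ne']
      rw [sum_ite_of_iff (forall_glue_iff_plus h1 (hflip _) a)]
      split_ifs
      exacts [le_rfl, by positivity]
    · simp only [he, false_and, if_false, abs_zero, Real.zero_rpow hq.ne', sum_const_zero]
      positivity
  calc ∑ a, ∑ c, |crossFlow FB Fn u u' a c| ^ q ≤ ∑ a, |Fn u u'| ^ q * |outflow FB L a| ^ q :=
        sum_le_sum fun a _ => hpt a
    _ ≤ |Fn u u'| ^ q * (2 * basisEnergy q FB) := by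
        rw [← mul_sum]
        exact mul_le_mul_of_nonneg_left
          (sum_rpow_outflow_le FB h3 hm hq (IsetW_mem_scriptL _ _)) (by positivity)
    _ = _ := mul_comm _ _

theorem powSum_copyPart_le (h3 : GR3 F) (hm : 1 ≤ m) (hq : 1 ≤ q) {Cdeg : ℕ}
    (hdeg : ∀ (l : ℕ) (w : Word S l), degGm F l w ≤ Cdeg) (hFn : Antisym (replGraph F n) Fn) :
    powSum q (fun p p' : Word S n × Word S m =>
      if p.1 = p'.1 then copyFlow FB tA oA Fn p.1 p.2 p'.2 else 0) ≤
      (Cdeg : ℝ) ^ (q - 1) * (2 * basisEnergy q FB) * powSum q Fn := by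
  have hdiag : ∀ u a, ∑ u', ∑ c, |if u = u' then copyFlow FB tA oA Fn u a c else 0| ^ q =
      ∑ c, |copyFlow FB tA oA Fn u a c| ^ q := by
    intro u a
    rw [sum_comm]
    simp [apply_ite (fun x : ℝ => |x| ^ q), Real.zero_rpow (by linarith : q ≠ 0)]
  simp only [powSum, Fintype.sum_prod_type, hdiag, mul_sum]
  refine sum_le_sum fun u _ => ?_
  rw [← mul_sum]
  exact powSum_copyFlow_le FB tA oA Fn h3 hm hq hdeg hFn u

theorem powSum_crossPart_le (h1 : GR1 F) (h3 : GR3 F) (hm : 1 ≤ m)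
    (hflip : ∀ t, IsFlip F t (ηfam t)) (hq : 0 < q) :
    powSum q (fun p p' : Word S n × Word S m => crossFlow FB Fn p.1 p'.1 p.2 p'.2) ≤
      2 * basisEnergy q FB * powSum q Fn := by
  simp only [powSum, Fintype.sum_prod_type, mul_sum]
  refine sum_le_sum fun u _ => ?_
  rw [sum_comm]
  exact sum_le_sum fun u' _ => sum_rpow_crossFlow_le FB Fn h1 h3 hm hflip hq u u'

theorem energy_replFlow_le (h1 : GR1 F) (h3 : GR3 F) (hm : 1 ≤ m)
    (hflip : ∀ t, IsFlip F t (ηfam t)) (hq : 1 ≤ q) {Cdeg : ℕ}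
    (hdeg : ∀ (l : ℕ) (w : Word S l), degGm F l w ≤ Cdeg) (hFn : Antisym (replGraph F n) Fn) :
    energy q (replFlow FB tA oA Fn) ≤
      2 * 3 ^ (q - 1) * ((Cdeg : ℝ) ^ (q - 1) + 2) * basisEnergy q FB * energy q Fn := by
  have hsplit := powSum_add_sub_le hq
    (fun p p' : Word S n × Word S m => if p.1 = p'.1 then copyFlow FB tA oA Fn p.1 p.2 p'.2 else 0)
    (fun p p' => crossFlow FB Fn p.1 p'.1 p.2 p'.2) (fun p p' => crossFlow FB Fn p'.1 p.1 p'.2 p.2)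
  rw [powSum_swap (fun p p' : Word S n × Word S m => crossFlow FB Fn p.1 p'.1 p.2 p'.2)] at hsplit
  have hcopy := powSum_copyPart_le FB tA oA Fn h3 hm hq hdeg hFn
  have hcross := powSum_crossPart_le FB Fn h1 h3 hm hflip (q := q) (by linarith)
  have hrepl : powSum q (replFlow FB tA oA Fn) = powSum q (prodFlow FB tA oA Fn) :=
    powSum_comp_equiv q (Fin.appendEquiv n m) _
  rw [energy_eq_powSum, energy_eq_powSum, hrepl]
  have h3q : (0 : ℝ) ≤ 3 ^ (q - 1) := by positivity
  calc powSum q (prodFlow FB tA oA Fn) / 2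
      ≤ 3 ^ (q - 1) * ((Cdeg : ℝ) ^ (q - 1) * (2 * basisEnergy q FB) * powSum q Fn +
          2 * basisEnergy q FB * powSum q Fn + 2 * basisEnergy q FB * powSum q Fn) / 2 :=
        div_le_div_of_nonneg_right (hsplit.trans (mul_le_mul_of_nonneg_left (by linarith) h3q))
          zero_le_two
    _ = _ := by ring

end ReplacementFlow

/-- The replacement flow theorem: given a flow basis `𝓕^{(m)}` on
`G̃_m` and a unit flow `F_n` from `A_n` to `B_n` in `G_n` (with assigned types and
orientations on `A_n ∪ B_n`), there are a constant `C ≥ 1` depending only on the degree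
bound and on `p`, and a unit flow `F_{n+m}` from `A_{n+m}` to `B_{n+m}` in `G_{n+m}` with
`E_q(F_{n+m}) ≤ C · E_q(𝓕^{(m)}) · E_q(F_n)` and with prescribed divergence on the
boundary words. -/
theorem statement17 (Cdeg : ℕ) (p : ℝ) (hp : 1 < p) (q : ℝ) (hq : q = p / (p - 1)) :
    ∃ C : ℝ, 1 ≤ C ∧
      ∀ (S T : Type) [Fintype S] [Nonempty T] (F : System S T), GR F →
        (∀ (l : ℕ) (w : Word S l), degGm F l w ≤ Cdeg) →
        ∀ ηfam : T → Iso F F, (∀ t, IsFlip F t (ηfam t)) →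
        ∀ n m : ℕ, 1 ≤ n → 1 ≤ m →
        ∀ A B : Set (Word S n), A.Nonempty → B.Nonempty → (∀ x, ¬ (x ∈ A ∧ x ∈ B)) →
        ∀ tA : Word S n → T, ∀ oA : Word S n → Bool,
        ∀ FB : FlowBasis F ηfam m,
        ∀ Fn : Word S n → Word S n → ℝ,
          IsFlow (replGraph F n) A B Fn → totalFlow A Fn = 1 →
          ∃ Fnm : Word S (n + m) → Word S (n + m) → ℝ,
            IsFlow (replGraph F (n + m))
              {x : Word S (n + m) | ∃ u ∈ A, ∃ v : Word S m,
                (∀ i, v i ∈ Iset F (tA u) (oA u)) ∧ x = Fin.append u v}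
              {x : Word S (n + m) | ∃ u ∈ B, ∃ v : Word S m,
                (∀ i, v i ∈ Iset F (tA u) (oA u)) ∧ x = Fin.append u v}
              Fnm ∧
            totalFlow
              {x : Word S (n + m) | ∃ u ∈ A, ∃ v : Word S m,
                (∀ i, v i ∈ Iset F (tA u) (oA u)) ∧ x = Fin.append u v} Fnm = 1 ∧
            energy q Fnm ≤ C * basisEnergy q FB * energy q Fn ∧
            (∀ u : Word S n, u ∈ A ∪ B →
              ∀ pr : AddedV F m, pr.1.1 = IsetW F (tA u) (oA u) m →
              ∀ hne : pr.1.1 ≠ IsetW F (tA u) (!(oA u)) m,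
                fdiv Fnm (Fin.append u pr.1.2) =
                  fdiv Fn u *
                    FB.flow pr.1.1 (IsetW F (tA u) (!(oA u)) m) pr.2.1
                      (by exact ⟨tA u, !(oA u), rfl⟩) hne
                      (Sum.inr pr) (Sum.inl pr.1.2)) := by
  have hq1 : 1 ≤ q := by
    rw [hq, le_div_iff₀ (by linarith)]
    linarith
  refine ⟨2 * 3 ^ (q - 1) * ((Cdeg : ℝ) ^ (q - 1) + 2), ?_, ?_⟩
  · nlinarith [Real.one_le_rpow (by norm_num : (1 : ℝ) ≤ 3) (by linarith : 0 ≤ q - 1),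
      Real.rpow_nonneg (Nat.cast_nonneg Cdeg) (q - 1)]
  rintro S T _ _ F ⟨h1, -, h3⟩ hdeg ηfam hflip n m _ hm A B _ _ _ tA oA FB Fn hFn hunit
  have hdiv := fdiv_replFlow FB tA oA Fn h1 h3 hm hflip hFn.1
  refine ⟨replFlow FB tA oA Fn, ⟨replFlow_antisym FB tA oA Fn, fun x hx => ?_⟩,
    (totalFlow_replFlow FB tA oA Fn h1 h3 hm hflip hFn.1 A).trans hunit,
    energy_replFlow_le FB tA oA Fn h1 h3 hm hflip hq1 hdeg hFn.1, fun u _ pr hpr hne => ?_⟩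
  · obtain ⟨⟨u, v⟩, rfl⟩ := (Fin.appendEquiv n m).surjective x
    rw [appendEquiv_apply_mk, hdiv]
    by_cases hu : u ∈ A ∪ B
    · have hv : v ∉ IsetW F (tA u) (oA u) m := fun hv =>
        hx (hu.imp (fun hu => ⟨u, hu, v, hv, rfl⟩) fun hu => ⟨u, hu, v, hv, rfl⟩)
      rw [outflow_of_notMem FB hv, mul_zero]
    · rw [hFn.2 u hu, zero_mul]
  · rw [hdiv, ← hpr]
    exact congrArg (fdiv Fn u * ·) (flow_pendant_out FB _ _ hne pr rfl).symm

end IGSP
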